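/- Let H be a Hopf algebra over k, (V,Y,1,s) an H-module vertex algebra, and (M, Y_M, s_M) a left module over V#H; view M as an H-module via h·m = Res_z z^{−1} Y_M(1#h,z)m and as a V-module via a ↦ Y_M(a#1,z). Then for all a ∈ V, h ∈ H, m ∈ M: (i) h·(Y_M(a#1,z)m) = Σ Y_M(h_1 a#1,z)(h_2·m), and (ii) Y_M(a#h,z)m = Y_M(a#1,z)(h·m). -/

import Mathlib

open scoped TensorProduct DirectSum

namespace HopfVA

/-- Generalized binomial coefficient `C(r, j)` for an integer `r` (exact division). -/
def ibinom (r : ℤ) (j : ℕ) : ℤ := (∏ i ∈ Finset.range j, (r - (i : ℤ))) / (j.factorial : ℤ)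

/-- `(-1)^q` for an integer exponent `q`. -/
def negOnePow (q : ℤ) : ℤ := if Even q then 1 else -1

section Core

variable {k : Type*} [CommRing k] {V : Type*} [AddCommGroup V] [Module k V]

/-- If `f p q` is the coefficient of `z^p w^q` of a two-variable formal distribution,
then `zwMul n f p q` is the coefficient of `z^p w^q` of `(z-w)^n` times that distribution. -/
def zwMul (n : ℕ) (f : ℤ → ℤ → V) : ℤ → ℤ → V := fun p q =>
  ∑ i ∈ Finset.range (n + 1),
    ((-1 : ℤ) ^ i * (n.choose i : ℤ)) • f (p - ((n : ℤ) - (i : ℤ))) (q - (i : ℤ))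

/-- The data of a state-field correspondence on a pointed vector space:
`Y a n b` is the `n`-th product `a_n b` (so that `Y(a,z)b = ∑ (a_n b) z^{-n-1}`),
`vac` is the vacuum vector and `T` is the translation operator. -/
structure VAData (k V : Type*) [CommRing k] [AddCommGroup V] [Module k V] where
  Y : V →ₗ[k] ℤ → Module.End k V
  vac : V
  T : Module.End k V

namespace VAData

variable (F : VAData k V)

/-- coefficient of `z^p w^q` in `Y(a,z)Y(b,w)c`. -/
def prodZW (a b c : V) : ℤ → ℤ → V := fun p q => F.Y a (-p - 1) (F.Y b (-q - 1) c)

/-- coefficient of `z^p w^q` in `Y(b,w)Y(a,z)c`. -/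
def prodWZ (a b c : V) : ℤ → ℤ → V := fun p q => F.Y b (-q - 1) (F.Y a (-p - 1) c)

/-- coefficient of `z^p w^q` in `i_{z,w} Y(a,z-w)Y(b,-w)c`. -/
noncomputable def compLHS (a b c : V) : ℤ → ℤ → V := fun p q =>
  negOnePow q •
    ∑ᶠ j : ℕ, ibinom (p + (j : ℤ)) j • F.Y a (-p - 1 - (j : ℤ)) (F.Y b ((j : ℤ) - 1 - q) c)

/-- Truncated (at `j < J`) version of `compLHS`, for `h`-adic statements. -/
def compLHStr (J : ℕ) (a b c : V) : ℤ → ℤ → V := fun p q =>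
  negOnePow q •
    ∑ j ∈ Finset.range J, ibinom (p + (j : ℤ)) j • F.Y a (-p - 1 - (j : ℤ)) (F.Y b ((j : ℤ) - 1 - q) c)

/-- coefficient of `z^p w^q` in `Y(Y(a,z)b,-w)c`. -/
def compRHS (a b c : V) : ℤ → ℤ → V := fun p q =>
  negOnePow q • F.Y (F.Y a (-p - 1) b) (-q - 1) c

/-- The axioms of a state-field correspondence: truncation, the vacuum axioms
`Y(1,z)a = a`, `Y(a,z)1 = a + (Ta)z + ⋯ ∈ V[[z]]`, and translation covariance
`[T, Y(a,z)] = Y(Ta,z) = ∂_z Y(a,z)`. -/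
def IsStateField : Prop :=
  (∀ a b : V, ∃ N : ℤ, ∀ n : ℤ, N ≤ n → F.Y a n b = 0) ∧
  (∀ (a : V) (n : ℤ), F.Y F.vac n a = if n = -1 then a else 0) ∧
  (∀ (a : V) (n : ℤ), 0 ≤ n → F.Y a n F.vac = 0) ∧
  (∀ a : V, F.Y a (-1) F.vac = a) ∧
  (∀ a : V, F.Y a (-2) F.vac = F.T a) ∧
  (∀ (a b : V) (n : ℤ), F.Y (F.T a) n b = F.T (F.Y a n b) - F.Y a n (F.T b)) ∧
  (∀ (a b : V) (n : ℤ), F.Y (F.T a) n b = (-n : ℤ) • F.Y a (n - 1) b)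

/-- The associativity relation
`(z-w)^N i_{z,w} Y(a,z-w)Y(b,-w)c = (z-w)^N Y(Y(a,z)b,-w)c`. -/
def IsAssocFA : Prop := ∀ a b c : V, ∃ N : ℕ, ∀ p q : ℤ,
  zwMul N (F.compLHS a b c) p q = zwMul N (F.compRHS a b c) p q

/-- A field algebra is a state-field correspondence satisfying associativity. -/
def IsFieldAlgebra : Prop := F.IsStateField ∧ F.IsAssocFA

/-- `(z-w)^n [Y(a,z), Y(b,w)] = 0`. -/
def IsLocalPair (a b : V) : Prop :=
  ∃ n : ℕ, ∀ (c : V) (p q : ℤ), zwMul n (F.prodZW a b c) p q = zwMul n (F.prodWZ a b c) p q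

/-- A vertex algebra is a field algebra all of whose pairs of fields are local. -/
def IsVertexAlgebra : Prop := F.IsFieldAlgebra ∧ ∀ a b : V, F.IsLocalPair a b

/-- `(z-w)^n Y(a,z)Y(b,w) = (z-w)^n ∑ᵢ Y(bⁱ,w)Y(aⁱ,z)`. -/
def IsSLocalPair (a b : V) : Prop :=
  ∃ (n m : ℕ) (A B : Fin m → V), ∀ (c : V) (p q : ℤ),
    zwMul n (F.prodZW a b c) p q = ∑ i, zwMul n (F.prodWZ (A i) (B i) c) p q

/-- An `S`-local vertex algebra is a field algebra all of whose pairs of fields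
are `S`-local. -/
def IsSLocalVA : Prop := F.IsFieldAlgebra ∧ ∀ a b : V, F.IsSLocalPair a b

end VAData

/-- Data of a module over a field algebra: the module fields `Y^M` and translation `sM`. -/
structure VModData (k V M : Type*) [CommRing k] [AddCommGroup V] [Module k V]
    [AddCommGroup M] [Module k M] where
  YM : V →ₗ[k] ℤ → Module.End k M
  sM : Module.End k M

namespace VModData

variable {M : Type*} [AddCommGroup M] [Module k M]

/-- coefficient of `z^p w^q` in `Y^M(a,z)Y^M(b,w)x`. -/
def mprodZW (Mo : VModData k V M) (a b : V) (x : M) : ℤ → ℤ → M := fun p q =>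
  Mo.YM a (-p - 1) (Mo.YM b (-q - 1) x)

/-- coefficient of `z^p w^q` in `Y^M(b,w)Y^M(a,z)x`. -/
def mprodWZ (Mo : VModData k V M) (a b : V) (x : M) : ℤ → ℤ → M := fun p q =>
  Mo.YM b (-q - 1) (Mo.YM a (-p - 1) x)

/-- coefficient of `z^p w^q` in `i_{z,w} Y^M(a,z-w)Y^M(b,-w)x`. -/
noncomputable def mcompLHS (Mo : VModData k V M) (a b : V) (x : M) : ℤ → ℤ → M := fun p q =>
  negOnePow q •
    ∑ᶠ j : ℕ, ibinom (p + (j : ℤ)) j • Mo.YM a (-p - 1 - (j : ℤ)) (Mo.YM b ((j : ℤ) - 1 - q) x)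

/-- coefficient of `z^p w^q` in `Y^M(Y(a,z)b,-w)x`. -/
def mcompRHS (F : VAData k V) (Mo : VModData k V M) (a b : V) (x : M) : ℤ → ℤ → M := fun p q =>
  negOnePow q • Mo.YM (F.Y a (-p - 1) b) (-q - 1) x

/-- `M` is a left module over the field algebra `F`: truncation, vacuum, translation
invariance and the associativity axiom. -/
def IsModule (F : VAData k V) (Mo : VModData k V M) : Prop :=
  (∀ (a : V) (x : M), ∃ N : ℤ, ∀ n : ℤ, N ≤ n → Mo.YM a n x = 0) ∧
  (∀ (x : M) (n : ℤ), Mo.YM F.vac n x = if n = -1 then x else 0) ∧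
  (∀ (a : V) (x : M) (n : ℤ),
      Mo.sM (Mo.YM a n x) - Mo.YM a n (Mo.sM x) = (-n : ℤ) • Mo.YM a (n - 1) x) ∧
  (∀ (a b : V) (x : M), ∃ N : ℕ, ∀ p q : ℤ,
      zwMul N (mcompLHS Mo a b x) p q = zwMul N (mcompRHS F Mo a b x) p q)

/-- Locality of the module fields `Y^M(a,z)`, `Y^M(b,w)`. -/
def IsLocalModPair (Mo : VModData k V M) (a b : V) : Prop :=
  ∃ n : ℕ, ∀ (x : M) (p q : ℤ),
    zwMul n (mprodZW Mo a b x) p q = zwMul n (mprodWZ Mo a b x) p q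

/-- `S`-locality of the module fields. -/
def IsSLocalModPair (Mo : VModData k V M) (a b : V) : Prop :=
  ∃ (n m : ℕ) (A B : Fin m → V), ∀ (x : M) (p q : ℤ),
    zwMul n (mprodZW Mo a b x) p q = ∑ i, zwMul n (mprodWZ Mo (A i) (B i) x) p q

end VModData

/-- The `f`-product `a_(f) b = Res_z f(z) Y(a,z) b`, where `f n` is the coefficient
of `z^n` in `f`. -/
noncomputable def fProduct (F : VAData k V) (f : ℤ → k) (a b : V) : V :=
  ∑ᶠ n : ℤ, f n • F.Y a n b

/-- Coefficients of the formal derivative `∂_z f`. -/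
def derivCoef (f : ℤ → k) : ℤ → k := fun n => ((n : ℤ) + 1 : ℤ) • f (n + 1)

/-- The subspace `V_(g) V` spanned by all products `a_(g) b` with `g = ∂_z f`. -/
noncomputable def gSpan (F : VAData k V) (f : ℤ → k) : Submodule k V :=
  Submodule.span k {x : V | ∃ a b : V, x = fProduct F (derivCoef f) a b}

/-- `x ≡ y mod h^M`, where `h = r`. -/
def ModH (r : k) (M : ℕ) (x y : V) : Prop := ∃ v : V, x - y = r ^ M • v

/-- An automorphism of the (state-field data of a) vertex algebra `F`. -/
def IsVAAut (F : VAData k V) (φ : V ≃ₗ[k] V) : Prop :=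
  φ F.vac = F.vac ∧ (∀ v : V, φ (F.T v) = F.T (φ v)) ∧
  ∀ (a b : V) (n : ℤ), φ (F.Y a n b) = F.Y (φ a) n (φ b)

end Core

/-- The coefficients of `f(z) = z⁻¹`. -/
def zinvCoef (k : Type*) [CommRing k] : ℤ → k := fun n => if n = -1 then 1 else 0

/-- The coefficients of `f(z) = c·e^{cz}/(e^{cz}-1)
  = z⁻¹ + c + ∑_{m≥1} B_m c^m z^{m-1}/m!` (Bernoulli numbers `B_m`). -/
noncomputable def berCoef {k : Type*} [Field k] [CharZero k] (c : k) : ℤ → k := fun n =>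
  if n < -1 then 0
  else ((bernoulli (n + 1).toNat : ℚ) • (c ^ (n + 1).toNat)) / ((n + 1).toNat.factorial : k)
        + (if n = 0 then c else 0)

/-- `f(z) = z⁻¹` or `f(z) = c·e^{cz}/(e^{cz}-1)` with `c ≠ 0`. -/
def AdmissibleF {k : Type*} [Field k] [CharZero k] (f : ℤ → k) : Prop :=
  f = zinvCoef k ∨ ∃ c : k, c ≠ 0 ∧ f = berCoef c

section HopfDefs

variable {k : Type*} [CommRing k] {V : Type*} [AddCommGroup V] [Module k V]
variable (H : Type*) [Ring H] [HopfAlgebra k H]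

/-- `V` is an `H`-module field algebra: `h·1 = ε(h)1`, `h(Ta) = T(ha)` and
`h(aₙb) = ∑ (h₁a)ₙ(h₂b)` (the last condition quantified over all finite
representations of `Δ(h)`). -/
def IsHModuleFA [Module H V] [IsScalarTower k H V] (F : VAData k V) : Prop :=
  (∀ h : H, h • F.vac = (Coalgebra.counit (R := k) h) • F.vac) ∧
  (∀ (h : H) (a : V), h • (F.T a : V) = F.T (h • a)) ∧
  (∀ (h : H) (a b : V) (n : ℤ) (m : ℕ) (h1 h2 : Fin m → H),
      Coalgebra.comul (R := k) h = ∑ i, h1 i ⊗ₜ[k] h2 i →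
      h • (F.Y a n b : V) = ∑ i, F.Y (h1 i • a) n (h2 i • b))

/-- The smash product structure `V # H` on `V ⊗ H`:
`Y(a#h,z)(b#g) = ∑ Y(a,z)(h₁b) # h₂g`, vacuum `1#1`, translation `T#1`. -/
def SmashChar [Module H V] [IsScalarTower k H V] (F : VAData k V)
    (FS : VAData k (V ⊗[k] H)) : Prop :=
  (∀ (a b : V) (h g : H) (n : ℤ) (m : ℕ) (h1 h2 : Fin m → H),
      Coalgebra.comul (R := k) h = ∑ i, h1 i ⊗ₜ[k] h2 i →
      FS.Y (a ⊗ₜ[k] h) n (b ⊗ₜ[k] g) = ∑ i, (F.Y a n (h1 i • b) : V) ⊗ₜ[k] (h2 i * g)) ∧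
  (FS.vac = F.vac ⊗ₜ[k] (1 : H)) ∧
  (∀ (a : V) (h : H), FS.T (a ⊗ₜ[k] h) = (F.T a : V) ⊗ₜ[k] h)

end HopfDefs

/-- The fixed point subspace `V^H = {v | h v = ε(h) v for all h}`. -/
def hFixed (k V H : Type*) [CommRing k] [AddCommGroup V] [Module k V]
    [Ring H] [HopfAlgebra k H] [Module H V] [IsScalarTower k H V]
    [SMulCommClass k H V] : Submodule k V where
  carrier := {v : V | ∀ h : H, h • v = (Coalgebra.counit (R := k) h) • v}
  add_mem' := by
    intro a b ha hb h
    rw [smul_add, ha h, hb h, ← smul_add]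
  zero_mem' := by
    intro h
    simp
  smul_mem' := by
    intro c v hv h
    rw [← smul_comm c h v, hv h, smul_smul, smul_smul, mul_comm]

end HopfVA

/-!
The field `Y(1#h, z)` of the smash product sends the vacuum to the constant `1#h`, so weak
associativity against the vacuum forces `Y_M(1#h, z)` to be the constant operator
`h· = (1#h)₋₁`.
Associativity for the pair `(a#1, 1#h)`, read at `z = 0`, gives (ii), since
`Y(a#1, z)(1#h) = Y(a, z)1 # h` equals `a#h` at `z = 0`. Associativity for `(1#h, a#1)`, where
the outer field is now constant and `Y(1#h, z)(a#1) = ∑ h₁a # h₂`, gives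
`h·Y_M(a#1, w)m = ∑ Y_M(h₁a#h₂, w)m`, which is (i) by (ii).

Each identity is read off from one coefficient `z^p w^q` of the associativity relation; the
factor `(z-w)^N` is harmless there because on expansions `i_{z,w} ∑ v_r (z-w)^r` it just shifts
`r` by `N`.
-/

lemma TensorProduct.exists_eq_sum_tmul_fin {R A B : Type*} [CommSemiring R] [AddCommMonoid A]
    [Module R A] [AddCommMonoid B] [Module R B] (x : A ⊗[R] B) :
    ∃ (m : ℕ) (u : Fin m → A) (v : Fin m → B), x = ∑ i, u i ⊗ₜ[R] v i := by
  obtain ⟨S, rfl⟩ := TensorProduct.exists_finset x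
  refine ⟨S.card, fun i => (S.equivFin.symm i).1.1, fun i => (S.equivFin.symm i).1.2, ?_⟩
  rw [Equiv.sum_comp S.equivFin.symm (fun s : S => (s : A × B).1 ⊗ₜ[R] (s : A × B).2)]
  exact (Finset.sum_coe_sort S _).symm

namespace HopfVA

lemma ibinom_eq_choose (r : ℤ) (j : ℕ) : ibinom r j = Ring.choose r j := by
  have hprod : ∏ i ∈ Finset.range j, (r - (i : ℤ)) = (descPochhammer ℤ j).eval r := by
    induction j with
    | zero => simp
    | succ j ih => rw [Finset.prod_range_succ, ih, descPochhammer_succ_eval]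
  rw [ibinom, hprod, Polynomial.eval_eq_smeval, Ring.descPochhammer_eq_factorial_smul_choose,
    nsmul_eq_mul]
  exact Int.mul_ediv_cancel_left _ (by exact_mod_cast j.factorial_ne_zero)

lemma negOnePow_eq_coe_negOnePow (q : ℤ) : negOnePow q = (q.negOnePow : ℤ) := by
  by_cases h : Even q
  · simp [negOnePow, h, Int.negOnePow_even]
  · simp [negOnePow, h, Int.negOnePow_odd _ (Int.not_even_iff_odd.mp h)]

lemma negOnePow_sub_natCast (q : ℤ) (i : ℕ) :
    negOnePow (q - i) = (-1) ^ i * negOnePow q := by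
  simp [negOnePow_eq_coe_negOnePow, Int.negOnePow_sub, Int.coe_negOnePow_natCast, mul_comm]

lemma negOnePow_smul_injective {M : Type*} [AddCommGroup M] (q : ℤ) :
    Function.Injective (negOnePow q • · : M → M) := by
  intro v w h
  simpa [negOnePow_eq_coe_negOnePow, smul_smul, ← Units.val_mul] using congr(negOnePow q • $h)

section ZW

variable {V : Type*} [AddCommGroup V]

lemma zwMul_zero (f : ℤ → ℤ → V) : zwMul 0 f = f := by
  ext p q
  simp [zwMul]

lemma zwMul_succ (n : ℕ) (f : ℤ → ℤ → V) (p q : ℤ) :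
    zwMul (n + 1) f p q = zwMul n f (p - 1) q - zwMul n f p (q - 1) := by
  have hextra : ∑ i ∈ Finset.range (n + 1 + 1),
      ((-1 : ℤ) ^ i * (n.choose i : ℤ)) • f (p - 1 - (n - i)) (q - i) =
      ∑ i ∈ Finset.range (n + 1),
        ((-1 : ℤ) ^ i * (n.choose i : ℤ)) • f (p - 1 - (n - i)) (q - i) := by
    simp [Finset.sum_range_succ _ (n + 1)]
  rw [zwMul, zwMul, zwMul, ← hextra, Finset.sum_range_succ', Finset.sum_range_succ' _ (n + 1),
    add_sub_right_comm, ← Finset.sum_sub_distrib]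
  congr 1
  · refine Finset.sum_congr rfl fun i _ => ?_
    have hp : p - ((n + 1 : ℕ) - (i + 1 : ℕ) : ℤ) = p - 1 - (n - (i + 1 : ℕ)) := by
      push_cast; ring
    have hq : q - 1 - i = q - (i + 1 : ℕ) := by push_cast; ring
    have hp' : p - (n - i) = p - 1 - (n - (i + 1 : ℕ)) := by push_cast; ring
    rw [hp, hq, hp', Nat.choose_succ_succ', pow_succ]
    push_cast
    module
  · simp [sub_sub, add_comm]

lemma zwMul_eq_zwMul_of_le {n N : ℕ} {f g : ℤ → ℤ → V} (h : zwMul n f = zwMul n g)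
    (hle : n ≤ N) : zwMul N f = zwMul N g := by
  induction N, hle using Nat.le_induction with
  | base => exact h
  | succ N _ ih => ext p q; rw [zwMul_succ, zwMul_succ, ih]

lemma zwMul_apply_self_of_support_nonpos {f : ℤ → ℤ → V} (hf : ∀ p q, 0 < p → f p q = 0)
    (N : ℕ) (q : ℤ) : zwMul N f N q = f 0 q := by
  rw [zwMul, Finset.sum_eq_single_of_mem 0 (by simp)]
  · simp
  · intro i _ hi
    rw [hf _ _ (by omega), smul_zero]

lemma zwMul_eq_zero_of_support_nonpos {f : ℤ → ℤ → V} (hf : ∀ p q, 0 < p → f p q = 0)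
    {N : ℕ} {p : ℤ} (hp : N < p) (q : ℤ) : zwMul N f p q = 0 :=
  Finset.sum_eq_zero fun i _ => by rw [hf _ _ (by omega), smul_zero]

lemma zwMul_apply_zero_of_support_nonneg {f : ℤ → ℤ → V} (hf : ∀ p q, p < 0 → f p q = 0)
    (N : ℕ) (q : ℤ) : zwMul N f 0 q = (-1 : ℤ) ^ N • f 0 (q - N) := by
  rw [zwMul, Finset.sum_eq_single_of_mem N (by simp)]
  · simp
  · intro i hi hiN
    rw [Finset.mem_range] at hi
    rw [hf _ _ (by omega), smul_zero]

/-- Coefficient of `z^p w^q` in `i_{z,w} ∑_r v_r (z-w)^r`. -/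
noncomputable def expandZW (v : ℤ → V) : ℤ → ℤ → V := fun p q =>
  if 0 ≤ q then (negOnePow q * Ring.choose (p + q) q.toNat) • v (p + q) else 0

lemma expandZW_sub_expandZW (v : ℤ → V) (p q : ℤ) :
    expandZW v (p - 1) q - expandZW v p (q - 1) = expandZW (fun r => v (r - 1)) p q := by
  rcases lt_or_ge q 0 with hq | hq
  · simp only [expandZW]
    rw [if_neg (by omega), if_neg (by omega), if_neg (by omega), sub_zero]
  obtain ⟨j, rfl⟩ := Int.eq_ofNat_of_zero_le hq
  rcases j with _ | j
  · simp [expandZW]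
  · have hchoose : Ring.choose (p + ((j : ℤ) + 1)) (j + 1) =
        Ring.choose (p + j) j + Ring.choose (p + j) (j + 1) := by
      rw [← Ring.choose_succ_succ]; ring_nf
    have hsign : negOnePow ((j : ℤ) + 1) = - negOnePow j := by
      have h := negOnePow_sub_natCast ((j : ℤ) + 1) 1
      simp only [Nat.cast_one, add_sub_cancel_right, pow_one, neg_one_mul] at h
      rw [h, neg_neg]
    have htoNat : ((j : ℤ) + 1).toNat = j + 1 := by omega
    simp only [expandZW, Nat.cast_succ, add_sub_cancel_right, Int.toNat_natCast, htoNat,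
      (by ring : p - 1 + ((j : ℤ) + 1) = p + j), (by ring : p + ((j : ℤ) + 1) - 1 = p + j),
      hchoose, hsign, (by omega : (0 : ℤ) ≤ j + 1), (by omega : (0 : ℤ) ≤ j), if_true]
    module

lemma zwMul_expandZW (N : ℕ) (v : ℤ → V) :
    zwMul N (expandZW v) = expandZW (fun r => v (r - N)) := by
  induction N with
  | zero => simp [zwMul_zero]
  | succ N ih =>
    ext p q
    rw [zwMul_succ, ih, expandZW_sub_expandZW]
    simp only [Nat.cast_succ, sub_sub, add_comm]

end ZW

section ModuleFields

variable {k : Type*} [CommRing k] {W : Type*} [AddCommGroup W] [Module k W]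
  {M : Type*} [AddCommGroup M] [Module k M] {FS : VAData k W} {Mo : VModData k W M}

lemma mcompLHS_eq_expandZW {A B : W} {x : M} (hB : ∀ t, t ≠ -1 → Mo.YM B t x = 0) :
    Mo.mcompLHS A B x = expandZW (fun r => Mo.YM A (-r - 1) (Mo.YM B (-1) x)) := by
  ext p q
  rw [VModData.mcompLHS, expandZW]
  split_ifs with hq
  · obtain ⟨j, rfl⟩ := Int.eq_ofNat_of_zero_le hq
    rw [finsum_eq_single _ j, ibinom_eq_choose, smul_smul, Int.toNat_natCast]
    · rw [sub_sub_cancel_left, (by ring : -p - 1 - j = -(p + j) - 1)]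
    · intro i hi
      rw [hB _ (by omega), map_zero, smul_zero]
  · have hzero (j : ℕ) :
        ibinom (p + j) j • Mo.YM A (-p - 1 - j) (Mo.YM B (j - 1 - q) x) = 0 := by
      rw [hB _ (by omega), map_zero, smul_zero]
    simp [hzero]

lemma mcompLHS_of_left_const {A B : W} {x : M} (hA : ∀ t y, t ≠ -1 → Mo.YM A t y = 0)
    {p : ℤ} (hp : 0 ≤ p) (q : ℤ) :
    Mo.mcompLHS A B x p q =
      if p = 0 then negOnePow q • Mo.YM A (-1) (Mo.YM B (-1 - q) x) else 0 := by
  rw [VModData.mcompLHS]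
  split_ifs with hp0
  · subst hp0
    rw [finsum_eq_single _ 0]
    · simp [ibinom_eq_choose]
    · intro j hj
      rw [hA _ _ (by omega), smul_zero]
  · have hzero (j : ℕ) :
        ibinom (p + j) j • Mo.YM A (-p - 1 - j) (Mo.YM B (j - 1 - q) x) = 0 := by
      rw [hA _ _ (by omega), smul_zero]
    simp [hzero]

lemma YM_eq_zero_of_Y_vac (hMo : Mo.IsModule FS) {b : W}
    (hb : ∀ n, FS.Y b n FS.vac = if n = -1 then b else 0)
    (x : M) {n : ℤ} (hn : n ≠ -1) : Mo.YM b n x = 0 := by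
  obtain ⟨N, hN⟩ := hMo.2.2.2 b FS.vac x
  have hL : Mo.mcompLHS b FS.vac x = expandZW (fun r => Mo.YM b (-r - 1) x) := by
    rw [mcompLHS_eq_expandZW fun t ht => by rw [hMo.2.1, if_neg ht]]
    simp [hMo.2.1]
  have hR : ∀ p q, VModData.mcompRHS FS Mo b FS.vac x p q =
      if p = 0 then negOnePow q • Mo.YM b (-q - 1) x else 0 := by
    intro p q
    rw [VModData.mcompRHS, hb]
    split_ifs <;> first | rfl | omega | simp
  have hRsupp : ∀ p q, 0 < p → VModData.mcompRHS FS Mo b FS.vac x p q = 0 := fun p q hp => by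
    rw [hR, if_neg hp.ne']
  rcases le_or_gt 0 n with hn0 | hn0
  · have key := hN N (-n - 1)
    rw [hL, zwMul_expandZW, zwMul_apply_self_of_support_nonpos hRsupp, hR, if_pos rfl,
      expandZW, if_neg (by omega)] at key
    exact negOnePow_smul_injective (-n - 1) (by simpa using key.symm)
  · have key := hN (N - n - 1) 0
    rw [hL, zwMul_expandZW, zwMul_eq_zero_of_support_nonpos hRsupp (by omega)] at key
    rw [expandZW, if_pos le_rfl, Int.toNat_zero, Ring.choose_zero_right,
      (by ring : -(N - n - 1 + 0 - N) - 1 = n)] at key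
    simpa [negOnePow] using key

lemma YM_Y_neg_one_of_right_const (hMo : Mo.IsModule FS) {A B : W} {x : M}
    (hB : ∀ t, t ≠ -1 → Mo.YM B t x = 0)
    (hAB : ∀ n, 0 ≤ n → FS.Y A n B = 0) (n : ℤ) :
    Mo.YM (FS.Y A (-1) B) n x = Mo.YM A n (Mo.YM B (-1) x) := by
  obtain ⟨N₀, hN₀⟩ := hMo.2.2.2 A B x
  -- With `N > n`, the coefficient of `z^0 w^(N-1-n)` isolates `Y_M(A, n)` on the left.
  set N := N₀ + (n + 1).toNat
  have hN := zwMul_eq_zwMul_of_le (funext₂ hN₀) (Nat.le_add_right N₀ (n + 1).toNat)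
  have hRsupp : ∀ p q, p < 0 → VModData.mcompRHS FS Mo A B x p q = 0 := fun p q hp => by
    rw [VModData.mcompRHS, hAB _ (by omega), map_zero, Pi.zero_apply, LinearMap.zero_apply,
      smul_zero]
  obtain ⟨Q, hQ⟩ : ∃ Q : ℕ, (Q : ℤ) = N - 1 - n := ⟨(N - 1 - n).toNat, by omega⟩
  have key := congrFun₂ hN 0 Q
  rw [mcompLHS_eq_expandZW hB, zwMul_expandZW, zwMul_apply_zero_of_support_nonneg hRsupp,
    expandZW, if_pos Q.cast_nonneg, VModData.mcompRHS, negOnePow_sub_natCast, smul_smul,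
    ← mul_assoc, ← pow_add, Even.neg_one_pow ⟨N, rfl⟩, one_mul, Int.toNat_natCast, zero_add,
    Ring.choose_natCast, Nat.choose_self, Nat.cast_one, mul_one,
    (by omega : -(Q - N : ℤ) - 1 = n), neg_zero, zero_sub] at key
  exact negOnePow_smul_injective _ key.symm

lemma YM_Y_neg_one_of_left_const (hMo : Mo.IsModule FS) {A B : W}
    (hA : ∀ t y, t ≠ -1 → Mo.YM A t y = 0)
    (hAB : ∀ n, n ≠ -1 → FS.Y A n B = 0) (x : M) (n : ℤ) :
    Mo.YM A (-1) (Mo.YM B n x) = Mo.YM (FS.Y A (-1) B) n x := by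
  obtain ⟨N, hN⟩ := hMo.2.2.2 A B x
  have hLsupp : ∀ p q, 0 < p → Mo.mcompLHS A B x p q = 0 := fun p q hp => by
    rw [mcompLHS_of_left_const hA hp.le, if_neg hp.ne']
  have hRsupp : ∀ p q, 0 < p → VModData.mcompRHS FS Mo A B x p q = 0 := fun p q hp => by
    rw [VModData.mcompRHS, hAB _ (by omega), map_zero, Pi.zero_apply, LinearMap.zero_apply,
      smul_zero]
  have key := hN N (-1 - n)
  rw [zwMul_apply_self_of_support_nonpos hLsupp, zwMul_apply_self_of_support_nonpos hRsupp,
    mcompLHS_of_left_const hA le_rfl, if_pos rfl, VModData.mcompRHS,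
    (by ring : -1 - (-1 - n) = n), (by ring : -(-1 - n) - 1 = n), neg_zero, zero_sub] at key
  exact negOnePow_smul_injective _ key

end ModuleFields

section Smash

variable {k : Type*} [CommRing k] {V : Type*} [AddCommGroup V] [Module k V]
  {H : Type*} [Ring H] [HopfAlgebra k H] [Module H V] [IsScalarTower k H V]
  {F : VAData k V} {FS : VAData k (V ⊗[k] H)}

lemma smash_Y_vac_tmul (hF : F.IsStateField) (hFS : SmashChar H F FS) {h : H} {m : ℕ}
    {h1 h2 : Fin m → H} (hrep : Coalgebra.comul (R := k) h = ∑ i, h1 i ⊗ₜ[k] h2 i)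
    (b : V) (g : H) (n : ℤ) :
    FS.Y (F.vac ⊗ₜ h) n (b ⊗ₜ g) =
      if n = -1 then ∑ i, (h1 i • b) ⊗ₜ[k] (h2 i * g) else 0 := by
  rw [hFS.1 _ _ _ _ _ _ _ _ hrep]
  split_ifs with hn <;> simp [hF.2.1, hn]

lemma smash_Y_vac_tmul_vac (hF : F.IsStateField) (hHF : IsHModuleFA H F)
    (hFS : SmashChar H F FS) (h : H) (n : ℤ) :
    FS.Y (F.vac ⊗ₜ h) n FS.vac = if n = -1 then F.vac ⊗ₜ h else 0 := by
  obtain ⟨m, h1, h2, hrep⟩ :=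
    TensorProduct.exists_eq_sum_tmul_fin (Coalgebra.comul (R := k) h)
  have hcounit : ∑ i, Coalgebra.counit (R := k) (h1 i) • h2 i = h :=
    Coalgebra.sum_counit_smul ⟨Finset.univ, h1, h2, hrep.symm⟩
  rw [hFS.2.1, smash_Y_vac_tmul hF hFS hrep]
  simp only [hHF.1, mul_one, TensorProduct.smul_tmul, ← TensorProduct.tmul_sum, hcounit]

lemma smash_Y_tmul_one_vac (hFS : SmashChar H F FS) (a : V) (h : H) (n : ℤ) :
    FS.Y (a ⊗ₜ 1) n (F.vac ⊗ₜ h) = F.Y a n F.vac ⊗ₜ h := by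
  have hone : Coalgebra.comul (R := k) (1 : H) = ∑ _i : Fin 1, (1 : H) ⊗ₜ[k] (1 : H) := by
    rw [Bialgebra.comul_one, Fin.sum_univ_one, Algebra.TensorProduct.one_def]
  rw [hFS.1 _ _ _ _ _ _ _ _ hone, Fin.sum_univ_one, one_smul, one_mul]

end Smash

theorem statement15_general {k : Type*} [Field k]
    {V : Type*} [AddCommGroup V] [Module k V]
    {H : Type*} [Ring H] [HopfAlgebra k H]
    [Module H V] [IsScalarTower k H V]
    {M : Type*} [AddCommGroup M] [Module k M]
    (F : VAData k V) (hF : F.IsVertexAlgebra) (hHF : IsHModuleFA H F)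
    (FS : VAData k (V ⊗[k] H)) (hFS : SmashChar H F FS)
    (Mo : VModData k (V ⊗[k] H) M) (hMo : VModData.IsModule FS Mo) :
    -- (i)
    (∀ (h : H) (a : V) (x : M) (n : ℤ) (m : ℕ) (h1 h2 : Fin m → H),
      Coalgebra.comul (R := k) h = ∑ i, h1 i ⊗ₜ[k] h2 i →
      Mo.YM (F.vac ⊗ₜ[k] h) (-1) (Mo.YM (a ⊗ₜ[k] (1 : H)) n x)
        = ∑ i, Mo.YM ((h1 i • a) ⊗ₜ[k] (1 : H)) n
            (Mo.YM (F.vac ⊗ₜ[k] (h2 i)) (-1) x)) ∧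
    -- (ii)
    (∀ (a : V) (h : H) (n : ℤ) (x : M),
      Mo.YM (a ⊗ₜ[k] h) n x
        = Mo.YM (a ⊗ₜ[k] (1 : H)) n (Mo.YM (F.vac ⊗ₜ[k] h) (-1) x)) := by
  have hSF : F.IsStateField := hF.1.1
  have hconst (h : H) : ∀ t y, t ≠ -1 → Mo.YM (F.vac ⊗ₜ[k] h) t y = 0 := fun t y ht =>
    YM_eq_zero_of_Y_vac hMo (smash_Y_vac_tmul_vac hSF hHF hFS h) y ht
  have hii (a : V) (h : H) (n : ℤ) (x : M) :
      Mo.YM (a ⊗ₜ[k] h) n x =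
        Mo.YM (a ⊗ₜ[k] (1 : H)) n (Mo.YM (F.vac ⊗ₜ[k] h) (-1) x) := by
    have hcreation : ∀ t, 0 ≤ t → FS.Y (a ⊗ₜ 1) t (F.vac ⊗ₜ h) = 0 := fun t ht => by
      rw [smash_Y_tmul_one_vac hFS, hSF.2.2.1 a t ht, TensorProduct.zero_tmul]
    rw [← YM_Y_neg_one_of_right_const hMo (fun t ht => hconst h t x ht) hcreation,
      smash_Y_tmul_one_vac hFS, hSF.2.2.2.1]
  refine ⟨fun h a x n m h1 h2 hrep => ?_, hii⟩
  have hdelta : ∀ t, t ≠ -1 → FS.Y (F.vac ⊗ₜ h) t (a ⊗ₜ 1) = 0 := fun t ht => by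
    rw [smash_Y_vac_tmul hSF hFS hrep, if_neg ht]
  rw [YM_Y_neg_one_of_left_const hMo (hconst h) hdelta, smash_Y_vac_tmul hSF hFS hrep,
    if_pos rfl]
  simp only [mul_one, map_sum, Finset.sum_apply, LinearMap.sum_apply]
  exact Finset.sum_congr rfl fun i _ => hii _ _ n x

/-- Let `(M, Y_M, s_M)` be a left module over the smash product
`V#H`, viewed as an `H`-module via `h·m = Res_z z⁻¹ Y_M(1#h,z)m = (1#h)₋₁m` and as a
`V`-module via `Y_M(a#1,z)`.  Then for all `a ∈ V`, `h ∈ H`, `m ∈ M`: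
(i) `h·(Y_M(a#1,z)m) = ∑ Y_M(h₁a#1,z)(h₂·m)`, and
(ii) `Y_M(a#h,z)m = Y_M(a#1,z)(h·m)`. -/
theorem statement15 {k : Type*} [Field k] [CharZero k]
    {V : Type*} [AddCommGroup V] [Module k V]
    {H : Type*} [Ring H] [HopfAlgebra k H]
    [Module H V] [IsScalarTower k H V] [SMulCommClass k H V]
    {M : Type*} [AddCommGroup M] [Module k M]
    (F : VAData k V) (hF : F.IsVertexAlgebra) (hHF : IsHModuleFA H F)
    (FS : VAData k (V ⊗[k] H)) (hFS : SmashChar H F FS) (hFSla : FS.IsSLocalVA)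
    (Mo : VModData k (V ⊗[k] H) M) (hMo : VModData.IsModule FS Mo) :
    -- (i)
    (∀ (h : H) (a : V) (x : M) (n : ℤ) (m : ℕ) (h1 h2 : Fin m → H),
      Coalgebra.comul (R := k) h = ∑ i, h1 i ⊗ₜ[k] h2 i →
      Mo.YM (F.vac ⊗ₜ[k] h) (-1) (Mo.YM (a ⊗ₜ[k] (1 : H)) n x)
        = ∑ i, Mo.YM ((h1 i • a) ⊗ₜ[k] (1 : H)) n
            (Mo.YM (F.vac ⊗ₜ[k] (h2 i)) (-1) x)) ∧
    -- (ii)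
    (∀ (a : V) (h : H) (n : ℤ) (x : M),
      Mo.YM (a ⊗ₜ[k] h) n x
        = Mo.YM (a ⊗ₜ[k] (1 : H)) n (Mo.YM (F.vac ⊗ₜ[k] h) (-1) x)) :=
  statement15_general F hF hHF FS hFS Mo hMo

end HopfVA
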